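/- With the exact-3-hitting-set construction of ρ, π_1, π_2 as described, there exist natural numbers x_1, x_2 such that π_1^{x_1} π_2^{x_2} has the same cycle type as ρ if and only if there exists a natural number x_2 such that π_1 π_2^{x_2} has the same cycle type as ρ (i.e. the exponent of π_1 can always be taken equal to 1, so membership of the cycle type of ρ in the group ⟨π_1, π_2⟩ is equivalent to its membership in the coset π_1⟨π_2⟩). -/

import Mathlib

/-! Exact-3-hitting-set construction.  The ground set is `Fin n`; the `j`-th clause is
`{idx j 0, idx j 1, idx j 2}` with `idx j` strictly monotone.  `p i` is the `(i+1)`-st prime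
greater than `3` (zero-indexed, so `p 0 = 5`), `q n j` is the `(j+1)`-st of the `m` primes
following the first `2n` primes greater than `3`.  Every permutation group
`Sym(ℓ)`-component is realized on `Fin ℓ`, and the `ℓ`-cycle `([ℓ]) = (1,2,…,ℓ)` is realized
as `finRotate ℓ`.  Cycle types are computed in the symmetric group on the disjoint union of
all components (fixpoints are discarded by `Equiv.Perm.cycleType`, so the padding of the
second block of components to degree `p_n^3 q_j` is immaterial). -/

namespace HittingSet

/-- `p i` is the `(i+1)`-st prime greater than 3 (zero-indexed): `p 0 = 5`. -/
noncomputable def p (i : ℕ) : ℕ := Nat.nth Nat.Prime (i + 2)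

/-- `q n j` is the `(j+1)`-st prime following the first `2n` primes greater than 3. -/
noncomputable def q (n j : ℕ) : ℕ := Nat.nth Nat.Prime (2 * n + 2 + j)

/-- `r j = q_j ⬝ p_{i_1} p_{i_2} p_{i_3}` for the clause `C_j = {i_1 < i_2 < i_3}`. -/
noncomputable def r (n : ℕ) {m : ℕ} (idx : Fin m → Fin 3 → Fin n) (j : Fin m) : ℕ :=
  q n j * (p (idx j 0) * p (idx j 1) * p (idx j 2))

/-- The underlying set of the permutation group
`G = ∏_{i=1}^n Sym(p_i p_{n+i}) × ∏_{j=1}^m Sym(r_j)^6` (embedded in a symmetric group). -/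
abbrev Omega (n : ℕ) {m : ℕ} (idx : Fin m → Fin 3 → Fin n) : Type :=
  (Σ i : Fin n, Fin (p i * p (n + i))) ⊕ (Σ j : Fin m, Σ _d : Fin 6, Fin (r n idx j))

/-- `ρ = (ζ_1,…,ζ_n,η_1,…,η_m)` with `ζ_i = ([p_i p_{n+i}])` and
`η_j = (([r_j])^{p_{i_1}p_{i_2}p_{i_3}}, ([r_j])^{p_{i_1}}, ([r_j])^{p_{i_2}},
([r_j])^{p_{i_3}}, ([r_j]), ([r_j]))`. -/
noncomputable def rho (n : ℕ) {m : ℕ} (idx : Fin m → Fin 3 → Fin n) : Equiv.Perm (Omega n idx) :=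
  Equiv.sumCongr
    (Equiv.sigmaCongrRight fun _i => finRotate _)
    (Equiv.sigmaCongrRight fun j => Equiv.sigmaCongrRight fun d =>
      finRotate (r n idx j) ^
        (![p (idx j 0) * p (idx j 1) * p (idx j 2),
           p (idx j 0), p (idx j 1), p (idx j 2), 1, 1] d))

/-- `π_1 = (α_1,…,α_n,β_1,…,β_m)` with `α_i = ([p_i p_{n+i}])` and
`β_j = (([r_j])^{s_{j,1}}, …, ([r_j])^{s_{j,6}})`. -/
noncomputable def pi1 (n : ℕ) {m : ℕ} (idx : Fin m → Fin 3 → Fin n) (s : Fin m → ℕ → ℕ) :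
    Equiv.Perm (Omega n idx) :=
  Equiv.sumCongr
    (Equiv.sigmaCongrRight fun _i => finRotate _)
    (Equiv.sigmaCongrRight fun j => Equiv.sigmaCongrRight fun d =>
      finRotate (r n idx j) ^ s j d.val)

/-- `π_2 = (γ_1,…,γ_n,δ_1,…,δ_m)` with `γ_i = id` and
`δ_j = (([r_j])^{t_j}, …, ([r_j])^{t_j})`. -/
noncomputable def pi2 (n : ℕ) {m : ℕ} (idx : Fin m → Fin 3 → Fin n) (t : Fin m → ℕ) :
    Equiv.Perm (Omega n idx) :=
  Equiv.sumCongr (Equiv.refl _)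
    (Equiv.sigmaCongrRight fun j => Equiv.sigmaCongrRight fun _d =>
      finRotate (r n idx j) ^ t j)

/-! If `σ = π_1^{x_1} π_2^{x_2}` has the cycle type of `ρ`, then `σ^k` has that of `ρ^k` for
every `k`, so both move the same number of points.  All components of `σ`, `ρ` are powers of
standard cycles, and for suitable `k` every component fixed by `ρ^k` is visibly fixed by `σ^k`;
hence they fix the same components, which forces `x_1` to be prime to every `p_l` and `q_j`.
Choosing `y` with `x_1 y ≡ x_2` modulo all `r_j`, each component of `σ` is then the power of a
standard cycle whose exponent is `x_1` times that of `π_1 π_2^y`, and multiplying the exponent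
of a cycle by a unit does not change its conjugacy class. -/

end HittingSet

namespace Equiv.Perm

variable {α β : Type*}

theorem isConj_sumCongr {σ σ' : Perm α} {τ τ' : Perm β} (hσ : IsConj σ σ') (hτ : IsConj τ τ') :
    IsConj (sumCongr σ τ) (sumCongr σ' τ') := by
  obtain ⟨c, hc⟩ := isConj_iff.mp hσ
  obtain ⟨d, hd⟩ := isConj_iff.mp hτ
  exact isConj_iff.mpr ⟨sumCongr c d, by rw [sumCongr_inv, sumCongr_mul, sumCongr_mul, hc, hd]⟩

theorem isConj_sigmaCongrRight {β : α → Type*} {σ τ : ∀ a, Perm (β a)}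
    (h : ∀ a, IsConj (σ a) (τ a)) : IsConj (sigmaCongrRight σ) (sigmaCongrRight τ) := by
  choose c hc using fun a => isConj_iff.mp (h a)
  refine isConj_iff.mpr ⟨sigmaCongrRight c, ?_⟩
  rw [sigmaCongrRight_inv, sigmaCongrRight_mul, sigmaCongrRight_mul]
  exact congrArg sigmaCongrRight (funext hc)

theorem support_eq_of_subset_of_cycleType_eq [Fintype α] [DecidableEq α] {σ τ : Perm α}
    (hct : σ.cycleType = τ.cycleType) (hsub : σ.support ⊆ τ.support) : σ.support = τ.support :=
  Finset.eq_of_subset_of_card_le hsub (by rw [← sum_cycleType, ← sum_cycleType, hct])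

end Equiv.Perm

section finRotate

open Equiv Perm

variable {L : ℕ}

theorem orderOf_finRotate_of_le (hL : 2 ≤ L) : orderOf (finRotate L) = L := by
  rw [(isCycle_finRotate_of_le hL).orderOf, support_finRotate_of_le hL, Finset.card_univ,
    Fintype.card_fin]

theorem finRotate_pow_apply_eq_self_iff (hL : 2 ≤ L) {e : ℕ} (x : Fin L) :
    (finRotate L ^ e) x = x ↔ L ∣ e := by
  have hx : finRotate L x ≠ x := mem_support.mp (by simp [support_finRotate_of_le hL])
  rw [← (isCycle_finRotate_of_le hL).pow_eq_one_iff' hx, ← orderOf_dvd_iff_pow_eq_one,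
    orderOf_finRotate_of_le hL]

theorem isConj_finRotate_pow (hL : 2 ≤ L) {u a b : ℕ} (hu : u.Coprime L)
    (hab : a ≡ u * b [MOD L]) : IsConj (finRotate L ^ a) (finRotate L ^ b) := by
  have hcyc := isCycle_finRotate_of_le hL
  have hord := orderOf_finRotate_of_le hL
  have hcop : (orderOf (finRotate L)).Coprime u := by rw [hord]; exact hu.symm
  have hcyc_u : (finRotate L ^ u).IsCycle := hcyc.pow_iff.mpr hcop.symm
  rw [pow_eq_pow_iff_modEq.mpr (hord ▸ hab), pow_mul]
  refine IsConj.pow b (hcyc_u.isConj hcyc ?_)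
  rw [← hcyc_u.orderOf, ← hcyc.orderOf, hcop.orderOf_pow]

end finRotate

theorem Nat.coprime_of_dvd_mul_imp_dvd {x L : ℕ} (hL : 0 < L)
    (h : ∀ k, k ∣ L → L ∣ x * k → L ∣ k) : x.Coprime L := by
  set g := x.gcd L
  have hg : 0 < g := Nat.gcd_pos_of_pos_right x hL
  have hdvd : L ∣ x * (L / g) := by
    calc L = g * (L / g) := (Nat.mul_div_cancel' (Nat.gcd_dvd_right x L)).symm
      _ ∣ x * (L / g) := Nat.mul_dvd_mul_right (Nat.gcd_dvd_left x L) _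
  have hle : L ≤ L / g :=
    Nat.le_of_dvd (Nat.div_pos (Nat.le_of_dvd hL (Nat.gcd_dvd_right x L)) hg)
      (h _ (Nat.div_dvd_of_dvd (Nat.gcd_dvd_right x L)) hdvd)
  by_contra hne
  exact absurd (Nat.div_lt_self hL (by omega : 1 < g)) (not_lt.mpr hle)

theorem Nat.exists_mul_modEq_of_coprime {x R : ℕ} (h : x.Coprime R) (y : ℕ) :
    ∃ z, x * z ≡ y [MOD R] := by
  rcases Nat.eq_zero_or_pos R with rfl | hR
  · exact ⟨y, by rw [(Nat.coprime_zero_right x).mp h, one_mul]⟩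
  have : NeZero R := ⟨hR.ne'⟩
  refine ⟨(((ZMod.unitOfCoprime x h)⁻¹ : (ZMod R)ˣ) * (y : ZMod R)).val, ?_⟩
  rw [← ZMod.natCast_eq_natCast_iff, Nat.cast_mul, ZMod.natCast_zmod_val,
    ← ZMod.coe_unitOfCoprime x h, Units.mul_inv_cancel_left]

namespace HittingSet

open Equiv Finset

theorem p_prime (i : ℕ) : (p i).Prime := Nat.prime_nth_prime _

theorem q_prime (n j : ℕ) : (q n j).Prime := Nat.prime_nth_prime _

theorem coprime_q_p {n l : ℕ} (j : ℕ) (hl : l < 2 * n) : (q n j).Coprime (p l) :=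
  (Nat.coprime_primes (q_prime n j) (p_prime l)).mpr fun h => by
    have := (Nat.nth_strictMono Nat.infinite_setOfPred_prime).injective h
    omega

theorem coprime_q_q {n j j' : ℕ} (h : j ≠ j') : (q n j).Coprime (q n j') :=
  (Nat.coprime_primes (q_prime n j) (q_prime n j')).mpr fun hq => by
    have := (Nat.nth_strictMono Nat.infinite_setOfPred_prime).injective hq
    omega

variable {n m : ℕ} {idx : Fin m → Fin 3 → Fin n}

/-- `P_j = p_{i_1} p_{i_2} p_{i_3}`, so that `r_j = q_j P_j`. -/
noncomputable def clauseProd (idx : Fin m → Fin 3 → Fin n) (j : Fin m) : ℕ :=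
  p (idx j 0) * p (idx j 1) * p (idx j 2)

/-- The exponents of `([r_j])` in the six components of `η_j`. -/
noncomputable def rhoExp (idx : Fin m → Fin 3 → Fin n) (j : Fin m) : Fin 6 → ℕ :=
  ![clauseProd idx j, p (idx j 0), p (idx j 1), p (idx j 2), 1, 1]

theorem r_eq_q_mul_clauseProd (j : Fin m) : r n idx j = q n j * clauseProd idx j := rfl

theorem two_le_p_mul_p (i : Fin n) : 2 ≤ p i * p (n + i) :=
  (p_prime _).two_le.trans (Nat.le_mul_of_pos_right _ (p_prime _).pos)

theorem two_le_r (j : Fin m) : 2 ≤ r n idx j :=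
  (q_prime n j).two_le.trans
    (Nat.le_mul_of_pos_right _ (Nat.pos_of_ne_zero (by simp [(p_prime _).ne_zero])))

theorem coprime_q_clauseProd (j : ℕ) (j' : Fin m) : (q n j).Coprime (clauseProd idx j') := by
  have hp : ∀ a : Fin 3, (q n j).Coprime (p (idx j' a)) := fun a => coprime_q_p j (by omega)
  exact ((hp 0).mul_right (hp 1)).mul_right (hp 2)

theorem coprime_q_rhoExp (j : Fin m) (d : Fin 6) : (q n j).Coprime (rhoExp idx j d) := by
  refine (coprime_q_clauseProd (idx := idx) j j).coprime_dvd_right ?_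
  fin_cases d <;> simp [rhoExp, clauseProd]
  · exact dvd_mul_of_dvd_left (dvd_mul_right _ _) _
  · exact dvd_mul_of_dvd_left (dvd_mul_left _ _) _

theorem not_r_dvd_of_coprime {j : Fin m} {c : ℕ} (hc : (q n j).Coprime c) : ¬ r n idx j ∣ c :=
  fun h => (q_prime n j).one_lt.ne' (hc.eq_one_of_dvd ((dvd_mul_right _ _).trans h))

noncomputable def blockRotation (idx : Fin m → Fin 3 → Fin n) (a : Fin n → ℕ)
    (b : Fin m → Fin 6 → ℕ) : Perm (Omega n idx) :=
  Perm.sumCongr (Perm.sigmaCongrRight fun i => finRotate _ ^ a i)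
    (Perm.sigmaCongrRight fun j => Perm.sigmaCongrRight fun d => finRotate (r n idx j) ^ b j d)

theorem blockRotation_mul (a a' : Fin n → ℕ) (b b' : Fin m → Fin 6 → ℕ) :
    blockRotation idx a b * blockRotation idx a' b' = blockRotation idx (a + a') (b + b') := by
  simp only [blockRotation, Perm.sumCongr_mul, Perm.sigmaCongrRight_mul]
  simp [Pi.mul_def, pow_add]

theorem blockRotation_pow (a : Fin n → ℕ) (b : Fin m → Fin 6 → ℕ) (k : ℕ) :
    blockRotation idx a b ^ k = blockRotation idx (k • a) (k • b) := by
  induction k with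
  | zero =>
    ext x
    rcases x with ⟨i, v⟩ | ⟨j, d, v⟩ <;> simp [blockRotation]
  | succ k ih => rw [pow_succ, ih, blockRotation_mul, succ_nsmul, succ_nsmul]

theorem blockRotation_inl_eq_self_iff (a : Fin n → ℕ) (b : Fin m → Fin 6 → ℕ) (i : Fin n)
    (v : Fin (p i * p (n + i))) :
    blockRotation idx a b (.inl ⟨i, v⟩) = .inl ⟨i, v⟩ ↔ p i * p (n + i) ∣ a i := by
  simp [blockRotation, finRotate_pow_apply_eq_self_iff (two_le_p_mul_p i)]

theorem blockRotation_inr_eq_self_iff (a : Fin n → ℕ) (b : Fin m → Fin 6 → ℕ) (j : Fin m)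
    (d : Fin 6) (v : Fin (r n idx j)) :
    blockRotation idx a b (.inr ⟨j, d, v⟩) = .inr ⟨j, d, v⟩ ↔ r n idx j ∣ b j d := by
  simp [blockRotation, finRotate_pow_apply_eq_self_iff (two_le_r j)]

theorem isConj_blockRotation {a a' : Fin n → ℕ} {b b' : Fin m → Fin 6 → ℕ}
    (ha : ∀ i : Fin n, IsConj (finRotate (p i * p (n + i)) ^ a i) (finRotate _ ^ a' i))
    (hb : ∀ j d, IsConj (finRotate (r n idx j) ^ b j d) (finRotate _ ^ b' j d)) :
    IsConj (blockRotation idx a b) (blockRotation idx a' b') :=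
  Perm.isConj_sumCongr (Perm.isConj_sigmaCongrRight ha)
    (Perm.isConj_sigmaCongrRight fun j => Perm.isConj_sigmaCongrRight (hb j))

/-- `ℓ ∣ e` says that the component `([ℓ])^e` is trivial; equal cycle types force equal
supports. -/
theorem blockRotation_dvd_iff_of_cycleType_eq {a a' : Fin n → ℕ} {b b' : Fin m → Fin 6 → ℕ}
    (hct : (blockRotation idx a b).cycleType = (blockRotation idx a' b').cycleType)
    (ha : ∀ i : Fin n, p i * p (n + i) ∣ a' i → p i * p (n + i) ∣ a i)
    (hb : ∀ j d, r n idx j ∣ b' j d → r n idx j ∣ b j d) :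
    (∀ i : Fin n, p i * p (n + i) ∣ a i ↔ p i * p (n + i) ∣ a' i) ∧
      ∀ j d, r n idx j ∣ b j d ↔ r n idx j ∣ b' j d := by
  have hsupp := Perm.support_eq_of_subset_of_cycleType_eq hct fun x => by
    rcases x with ⟨i, v⟩ | ⟨j, d, v⟩
    · simpa [blockRotation_inl_eq_self_iff] using mt (ha i)
    · simpa [blockRotation_inr_eq_self_iff] using mt (hb j d)
  have hfix x : blockRotation idx a b x = x ↔ blockRotation idx a' b' x = x := by
    simpa only [Perm.mem_support, ne_eq, not_iff_not] using Finset.ext_iff.mp hsupp x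
  refine ⟨fun i => ?_, fun j d => ?_⟩
  · have := two_le_p_mul_p i
    simpa [blockRotation_inl_eq_self_iff] using hfix (.inl ⟨i, ⟨0, by omega⟩⟩)
  · have := two_le_r (idx := idx) j
    simpa [blockRotation_inr_eq_self_iff] using hfix (.inr ⟨j, d, ⟨0, by omega⟩⟩)

variable {s : Fin m → ℕ → ℕ} {t : Fin m → ℕ} {x1 x2 : ℕ}

theorem pi1_pow_mul_pi2_pow (x1 x2 : ℕ) :
    pi1 n idx s ^ x1 * pi2 n idx t ^ x2 =
      blockRotation idx (fun _ => x1) (fun j d => s j d * x1 + t j * x2) := by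
  have h1 : pi1 n idx s = blockRotation idx 1 (fun j d => s j d) := by
    simp [pi1, blockRotation]
  have h2 : pi2 n idx t = blockRotation idx 0 (fun j _ => t j) := by
    ext x
    rcases x with ⟨i, v⟩ | ⟨j, d, v⟩ <;> simp [pi2, blockRotation]
  rw [h1, h2, blockRotation_pow, blockRotation_pow, blockRotation_mul]
  congr 1 <;> funext <;> simp [mul_comm]

theorem rho_eq : rho n idx = blockRotation idx 1 (rhoExp idx) := by
  simp [rho, blockRotation, rhoExp, clauseProd]

theorem dvd_iff_of_cycleType_eq_rho
    (H : (pi1 n idx s ^ x1 * pi2 n idx t ^ x2).cycleType = (rho n idx).cycleType) (k : ℕ)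
    (hk : ∀ (j : Fin m) (d : Fin 6),
      r n idx j ∣ k * rhoExp idx j d → r n idx j ∣ k * (s j d * x1 + t j * x2)) :
    (∀ i : Fin n, p i * p (n + i) ∣ k * x1 ↔ p i * p (n + i) ∣ k) ∧
      ∀ (j : Fin m) (d : Fin 6),
        r n idx j ∣ k * (s j d * x1 + t j * x2) ↔ r n idx j ∣ k * rhoExp idx j d := by
  have Hk := Perm.isConj_iff_cycleType_eq.mp ((Perm.isConj_iff_cycleType_eq.mpr H).pow k)
  rw [pi1_pow_mul_pi2_pow, rho_eq, blockRotation_pow, blockRotation_pow] at Hk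
  simpa using blockRotation_dvd_iff_of_cycleType_eq Hk
    (fun i h => by simpa using h.mul_right x1) (by simpa using hk)

theorem coprime_p_mul_p_of_cycleType_eq
    (H : (pi1 n idx s ^ x1 * pi2 n idx t ^ x2).cycleType = (rho n idx).cycleType) (i : Fin n) :
    x1.Coprime (p i * p (n + i)) := by
  refine Nat.coprime_of_dvd_mul_imp_dvd (by have := two_le_p_mul_p i; omega) fun k hk hdvd => ?_
  have hq (j : Fin m) : (q n j).Coprime (p i * p (n + i)) :=
    (coprime_q_p j (by omega)).mul_right (coprime_q_p j (by omega))
  have hmoved (j : Fin m) (d : Fin 6) : ¬ r n idx j ∣ k * rhoExp idx j d :=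
    not_r_dvd_of_coprime (((hq j).coprime_dvd_right hk).mul_right (coprime_q_rhoExp j d))
  exact ((dvd_iff_of_cycleType_eq_rho H k fun j d h => absurd h (hmoved j d)).1 i).mp
    (by rwa [mul_comm k])

/-- With `k = P_j ∏_{j' ≠ j} r_{j'}`, `ρ^k` moves every component of `η_j`. If `q_j ∣ x_1`, all
exponents of `π_1^{x_1} π_2^{x_2}` on those components are divisible by `q_j` (as `q_j ∣ t_j`),
so its `k`-th power would fix them. -/
theorem coprime_q_of_cycleType_eq (htq : ∀ j, t j % q n j = 0)
    (H : (pi1 n idx s ^ x1 * pi2 n idx t ^ x2).cycleType = (rho n idx).cycleType) (j : Fin m) :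
    x1.Coprime (q n j) := by
  refine ((q_prime n j).coprime_iff_not_dvd.mpr fun hqx => ?_).symm
  set k := clauseProd idx j * ∏ j' ∈ univ.erase j, r n idx j'
  have hqk : (q n j).Coprime k := by
    refine (coprime_q_clauseProd j j).mul_right (Nat.Coprime.prod_right fun j' hj' => ?_)
    exact (coprime_q_q fun h => (mem_erase.mp hj').1 (Fin.val_injective h).symm).mul_right
      (coprime_q_clauseProd j j')
  have hmoved (d : Fin 6) : ¬ r n idx j ∣ k * rhoExp idx j d :=
    not_r_dvd_of_coprime (hqk.mul_right (coprime_q_rhoExp j d))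
  have hk : ∀ (j' : Fin m) (d : Fin 6), r n idx j' ∣ k * rhoExp idx j' d →
      r n idx j' ∣ k * (s j' d * x1 + t j' * x2) := by
    intro j' d h
    by_cases hj : j' = j
    · exact absurd (hj ▸ h) (hmoved d)
    · exact ((dvd_prod_of_mem _ (mem_erase.mpr ⟨hj, mem_univ _⟩)).mul_left _).mul_right _
  refine hmoved 0 (((dvd_iff_of_cycleType_eq_rho H k hk).2 j 0).mp ?_)
  rw [r_eq_q_mul_clauseProd, mul_comm (q n j)]
  exact mul_dvd_mul (dvd_mul_right _ _)
    (dvd_add (dvd_mul_of_dvd_right hqx _)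
      (dvd_mul_of_dvd_left (Nat.dvd_of_mod_eq_zero (htq j)) _))

theorem coprime_r_of_cycleType_eq (htq : ∀ j, t j % q n j = 0)
    (H : (pi1 n idx s ^ x1 * pi2 n idx t ^ x2).cycleType = (rho n idx).cycleType) (j : Fin m) :
    x1.Coprime (r n idx j) := by
  have hp (a : Fin 3) : x1.Coprime (p (idx j a)) :=
    (coprime_p_mul_p_of_cycleType_eq H (idx j a)).coprime_dvd_right (dvd_mul_right _ _)
  exact (coprime_q_of_cycleType_eq htq H j).mul_right
    (((hp 0).mul_right (hp 1)).mul_right (hp 2))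

theorem isConj_pi1_mul_pi2_pow (hL : ∀ i : Fin n, x1.Coprime (p i * p (n + i)))
    (hr : ∀ j, x1.Coprime (r n idx j)) {y : ℕ} (hy : ∀ j, x1 * y ≡ x2 [MOD r n idx j]) :
    IsConj (pi1 n idx s ^ x1 * pi2 n idx t ^ x2) (pi1 n idx s * pi2 n idx t ^ y) := by
  have h1 := pi1_pow_mul_pi2_pow (idx := idx) (s := s) (t := t) 1 y
  rw [pow_one] at h1
  rw [h1, pi1_pow_mul_pi2_pow]
  refine isConj_blockRotation
    (fun i => isConj_finRotate_pow (two_le_p_mul_p i) (hL i) (by rw [mul_one]))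
    fun j d => isConj_finRotate_pow (two_le_r j) (hr j) ?_
  calc s j d * x1 + t j * x2 ≡ s j d * x1 + t j * (x1 * y) [MOD r n idx j] :=
        ((hy j).symm.mul_left _).add_left _
    _ = x1 * (s j d * 1 + t j * y) := by ring

theorem cycleType_eq_iff_coset_general
    (n m : ℕ) (idx : Fin m → Fin 3 → Fin n)
    (s : Fin m → ℕ → ℕ) (t : Fin m → ℕ)
    -- `t_j ∈ [0, r_j - 1]`, `t_j ≡ 1 (mod p_{i_a})` for `a ∈ [3]`, `t_j ≡ 0 (mod q_j)`
    (htq : ∀ j : Fin m, t j % q n j = 0)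
    :
    (∃ x1 x2 : ℕ,
        (pi1 n idx s ^ x1 * pi2 n idx t ^ x2).cycleType = (rho n idx).cycleType) ↔
      ∃ x2 : ℕ, (pi1 n idx s * pi2 n idx t ^ x2).cycleType = (rho n idx).cycleType := by
  constructor
  · rintro ⟨x1, x2, H⟩
    obtain ⟨y, hy⟩ := Nat.exists_mul_modEq_of_coprime
      (Nat.Coprime.prod_right fun j _ => coprime_r_of_cycleType_eq htq H j) x2
    refine ⟨y, H ▸ (Perm.isConj_iff_cycleType_eq.mp ?_).symm⟩
    exact isConj_pi1_mul_pi2_pow (coprime_p_mul_p_of_cycleType_eq H)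
      (coprime_r_of_cycleType_eq htq H) fun j => hy.of_dvd (dvd_prod_of_mem _ (mem_univ j))
  · rintro ⟨x2, h⟩
    exact ⟨1, x2, by rwa [pow_one]⟩

/-- There are `x_1, x_2` with `ct(π_1^{x_1} π_2^{x_2}) = ct(ρ)` if and only if there is an
`x_2` with `ct(π_1 π_2^{x_2}) = ct(ρ)`: the exponent of `π_1` can always be taken to be `1`,
so the cycle type of `ρ` is realized in the group `⟨π_1, π_2⟩` iff it is realized in the
coset `π_1⟨π_2⟩`. -/
theorem cycleType_eq_iff_coset
    (n m : ℕ) (idx : Fin m → Fin 3 → Fin n) (hidx : ∀ j, StrictMono (idx j))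
    (s : Fin m → ℕ → ℕ) (t : Fin m → ℕ)
    -- `s j d ∈ [0, r_j - 1]` for `d ∈ [6]` (here zero-indexed, `d ∈ {0,…,5}`)
    (hslt : ∀ j : Fin m, ∀ d : ℕ, d < 6 → s j d < r n idx j)
    -- `s_{j,d} ≡ 1 (mod q_j)` for all `d ∈ [6]`
    (hsq : ∀ j : Fin m, ∀ d : ℕ, d < 6 → s j d % q n j = 1)
    -- for `a ∈ [3]`: `s_{j,a} ≡ -1 (mod p_{i_a})` and `s_{j,a} ≡ 0 (mod p_{i_b})` for `b ≠ a`
    (hs1 : ∀ j : Fin m, ∀ a b : Fin 3,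
      (s j a.val + if a = b then 1 else 0) % p (idx j b) = 0)
    -- `(s_{j,4}, s_{j,5}, s_{j,6}) ≡ (-1,-3,-2) (mod p_{i_1})`, `(-2,-1,-3) (mod p_{i_2})`,
    -- `(-3,-2,-1) (mod p_{i_3})`
    (hs2 : ∀ j : Fin m, ∀ c b : Fin 3,
      (s j (3 + c.val) + (1 + (3 + b.val - c.val) % 3)) % p (idx j b) = 0)
    -- `t_j ∈ [0, r_j - 1]`, `t_j ≡ 1 (mod p_{i_a})` for `a ∈ [3]`, `t_j ≡ 0 (mod q_j)`
    (htlt : ∀ j : Fin m, t j < r n idx j)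
    (htp : ∀ j : Fin m, ∀ a : Fin 3, t j % p (idx j a) = 1)
    (htq : ∀ j : Fin m, t j % q n j = 0)
    :
    (∃ x1 x2 : ℕ,
        (pi1 n idx s ^ x1 * pi2 n idx t ^ x2).cycleType = (rho n idx).cycleType) ↔
      ∃ x2 : ℕ, (pi1 n idx s * pi2 n idx t ^ x2).cycleType = (rho n idx).cycleType :=
  cycleType_eq_iff_coset_general n m idx s t htq

end HittingSet
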